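/- Let G = (V,E) be a finite connected simple graph, s ∈ V, and R ≥ 0 an integer. Let c : V → ℤ/4ℤ and b : V → {↑, ↓} be functions such that b(s) = ↓ and, for every pair of adjacent vertices u, v with dist(s,v) = dist(s,u) + 1 ≤ R, the triple (b(u), b(v), c(v)) belongs to {(↑, ↑, c(u)), (↓, ↑, c(u)), (↓, ↑, c(u)−1), (↓, ↓, c(u))}. Then every vertex u with dist(s,u) ≤ R satisfies c(u) ∈ {c(s), c(s)−1}. In particular, any two vertices v, v' with dist(s,v) ≤ R and dist(s,v') ≤ R satisfy c(v) − c(v') ∈ {−1, 0, 1} in ℤ/4ℤ. -/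
import Mathlib

/-- The two possible values of the 'arrow' label. -/
inductive Arrow : Type
  | up : Arrow
  | down : Arrow
deriving DecidableEq

lemma exists_pred {V : Type*} (G : SimpleGraph V) (hG : G.Connected) (s u : V) (n : ℕ)
    (h : G.dist s u = n + 1) : ∃ v, G.Adj v u ∧ G.dist s v = n := by
  obtain ⟨p, hp⟩ := hG.exists_walk_length_eq_dist s u
  have hnil : ¬ p.reverse.Nil := by
    rw [SimpleGraph.Walk.not_nil_iff_lt_length]
    simp [hp, h]
  obtain ⟨v, h', q, hq⟩ := SimpleGraph.Walk.not_nil_iff.mp hnil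
  refine ⟨v, h'.symm, ?_⟩
  have hlen : q.length = n := by
    have := congrArg SimpleGraph.Walk.length hq
    simp [hp, h] at this
    omega
  have h1 : G.dist s v ≤ n := by
    have := SimpleGraph.dist_le q.reverse
    simpa [hlen] using this
  have h2 : n + 1 ≤ G.dist s v + 1 := by
    have htri := hG.dist_triangle (u := s) (v := v) (w := u)
    rw [SimpleGraph.dist_eq_one_iff_adj.mpr h'.symm] at htri
    omega
  omega

theorem stmt11 {V : Type*} [Fintype V] (G : SimpleGraph V) (hG : G.Connected)
    (s : V) (R : ℕ) (c : V → ZMod 4) (b : V → Arrow)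
    (hbs : b s = Arrow.down)
    (hcoh : ∀ u v : V, G.Adj u v → G.dist s v = G.dist s u + 1 → G.dist s v ≤ R →
      (b u, b v, c v) ∈ ({(Arrow.up, Arrow.up, c u), (Arrow.down, Arrow.up, c u),
        (Arrow.down, Arrow.up, c u - 1), (Arrow.down, Arrow.down, c u)} :
          Set (Arrow × Arrow × ZMod 4))) :
    (∀ u : V, G.dist s u ≤ R → c u ∈ ({c s, c s - 1} : Set (ZMod 4))) ∧
      ∀ v v' : V, G.dist s v ≤ R → G.dist s v' ≤ R →
        c v - c v' ∈ ({-1, 0, 1} : Set (ZMod 4)) := by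
  have key : ∀ n : ℕ, ∀ u : V, G.dist s u = n → n ≤ R →
      (b u = Arrow.down → c u = c s) ∧ c u ∈ ({c s, c s - 1} : Set (ZMod 4)) := by
    intro n
    induction n with
    | zero =>
      intro u hu _
      have hus : s = u := hG.dist_eq_zero_iff.mp hu
      subst hus
      exact ⟨fun _ => rfl, Or.inl rfl⟩
    | succ n ih =>
      intro u hu hR
      obtain ⟨v, hadj, hv⟩ := exists_pred G hG s u n hu
      have hdv : G.dist s u = G.dist s v + 1 := by omega
      have := hcoh v u hadj hdv (by omega)
      have ihv := ih v hv (by omega)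
      simp only [Set.mem_insert_iff, Set.mem_singleton_iff, Prod.mk.injEq] at this ⊢
      rcases this with ⟨h1, h2, h3⟩ | ⟨h1, h2, h3⟩ | ⟨h1, h2, h3⟩ | ⟨h1, h2, h3⟩
      · exact ⟨fun h => by rw [h2] at h; exact absurd h (by simp), h3 ▸ ihv.2⟩
      · refine ⟨fun h => by rw [h2] at h; exact absurd h (by simp), ?_⟩
        rw [h3, ihv.1 h1]; left; rfl
      · refine ⟨fun h => by rw [h2] at h; exact absurd h (by simp), ?_⟩
        rw [h3, ihv.1 h1]; right; rfl
      · have hc : c u = c s := by rw [h3]; exact ihv.1 h1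
        exact ⟨fun _ => hc, Or.inl hc⟩
  have main : ∀ u : V, G.dist s u ≤ R → c u ∈ ({c s, c s - 1} : Set (ZMod 4)) :=
    fun u hu => (key (G.dist s u) u rfl hu).2
  refine ⟨main, fun v v' hv hv' => ?_⟩
  have h1 := main v hv
  have h2 := main v' hv'
  simp only [Set.mem_insert_iff, Set.mem_singleton_iff] at h1 h2 ⊢
  rcases h1 with h1 | h1 <;> rcases h2 with h2 | h2 <;> rw [h1, h2] <;> ring_nf <;> simp
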